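/- arXiv:2506.12289 — 3 statements merged into one kernel-verified Lean document; each statement's English description precedes it below -/
import Mathlib

section
/- Let p be a prime number and let F be the algebraic closure of the field with p elements (in Lean: AlgebraicClosure (ZMod p)). If Γ is a finitely generated group, then every group homomorphism ρ : Γ →* SL(2, F) has finite range; equivalently, the image of Γ in the special linear group Matrix.SpecialLinearGroup (Fin 2) F is a finite subgroup. -/
/-- Let `p` be a prime and `F` the algebraic closure of `ZMod p`. If `Γ` is a finitely
generated group, then every group homomorphism `ρ : Γ →* SL(2, F)` has finite range. -/
theorem fg_group_hom_to_SL2_closure_finite_range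
    (p : ℕ) [Fact p.Prime] (Γ : Type*) [Group Γ] [Group.FG Γ]
    (ρ : Γ →* Matrix.SpecialLinearGroup (Fin 2) (AlgebraicClosure (ZMod p))) :
    Finite ρ.range := by
  classical
  set F := AlgebraicClosure (ZMod p)
  obtain ⟨S, hS⟩ := Group.fg_def.mp ‹Group.FG Γ›
  -- the (finite) set of all entries of images of generators
  let E : Set F := ⋃ g ∈ (S : Set Γ), Set.range (fun ij : Fin 2 × Fin 2 => (ρ g).1 ij.1 ij.2)
  have hEfin : E.Finite := S.finite_toSet.biUnion (fun g _ => Set.finite_range _)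
  have : Finite E := hEfin.to_subtype
  let K := IntermediateField.adjoin (ZMod p) E
  have hKfd : FiniteDimensional (ZMod p) K :=
    IntermediateField.finiteDimensional_adjoin (fun x _ => Algebra.IsIntegral.isIntegral x)
  have hKfin : Finite K := Module.finite_of_finite (ZMod p)
  let f : K →+* F := K.val.toRingHom
  have hf : Function.Injective f := K.val.toRingHom.injective
  let M := Matrix.SpecialLinearGroup.map (n := Fin 2) f
  have hrange : ρ.range ≤ M.range := by
    rw [MonoidHom.range_eq_map, ← hS, MonoidHom.map_closure]
    refine Subgroup.closure_le _ |>.mpr ?_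
    rintro x ⟨g, hg, rfl⟩
    have hmem : ∀ i j, (ρ g).1 i j ∈ K := by
      intro i j
      apply IntermediateField.subset_adjoin
      exact Set.mem_biUnion hg ⟨(i, j), rfl⟩
    let A : Matrix (Fin 2) (Fin 2) K := fun i j => ⟨(ρ g).1 i j, hmem i j⟩
    have hmap : A.map f = (ρ g).1 := by ext i j; rfl
    have hdet : A.det = 1 := by
      apply hf
      rw [RingHom.map_det, RingHom.mapMatrix_apply, hmap, (ρ g).2, map_one]
    refine ⟨⟨A, hdet⟩, ?_⟩
    ext i j
    exact congrFun (congrFun hmap i) j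
  have hfin : (Set.range M).Finite := Set.finite_range M
  have : ((ρ.range : Set _)).Finite := hfin.subset hrange
  exact this.to_subtype
end

section
/- Let p be a prime number, let n be a natural number, and let F be the algebraic closure of the field with p elements (AlgebraicClosure (ZMod p)). Then every finitely generated subgroup of the general linear group GL(n, F) (in Lean: Matrix.GeneralLinearGroup (Fin n) F, equivalently GL (Fin n) F) is finite. -/
set_option maxHeartbeats 1000000
set_option synthInstance.maxHeartbeats 200000

/-- Every finitely generated subgroup of `GL(n, F̄_p)` is finite, where `F̄_p` is the
algebraic closure of the field with `p` elements. -/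
theorem fg_subgroup_of_GL_closure_finite
    (p : ℕ) [Fact p.Prime] (n : ℕ)
    (H : Subgroup (Matrix.GeneralLinearGroup (Fin n) (AlgebraicClosure (ZMod p))))
    (hH : H.FG) :
    Finite H := by
  set F := AlgebraicClosure (ZMod p) with hF
  obtain ⟨T, hT⟩ := hH
  set S : Set F :=
    ⋃ g ∈ (T : Set (GL (Fin n) F)), (Set.range fun ij : Fin n × Fin n => g.val ij.1 ij.2) ∪
      (Set.range fun ij : Fin n × Fin n => g.inv ij.1 ij.2) with hS
  have hSfin : S.Finite := by
    apply Set.Finite.biUnion T.finite_toSet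
    intro g _
    exact (Set.finite_range _).union (Set.finite_range _)
  set A : Subalgebra (ZMod p) F := Algebra.adjoin (ZMod p) S with hA
  have hint : ∀ x ∈ hSfin.toFinset, IsIntegral (ZMod p) x := fun x _ =>
    Algebra.IsIntegral.isIntegral x
  have h1 := isNoetherian_adjoin_finset hSfin.toFinset hint
  have h2 := Module.IsNoetherian.finite (ZMod p)
    (Algebra.adjoin (ZMod p) (hSfin.toFinset : Set F))
  have hAcoe : A = Algebra.adjoin (ZMod p) (hSfin.toFinset : Set F) := by
    rw [hA, hSfin.coe_toFinset]
  have hAfin : Finite A := by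
    rw [hAcoe]; exact Module.finite_of_finite (ZMod p)
  -- the subgroup of GL with entries in A
  set G : Subgroup (GL (Fin n) F) :=
    { carrier := {g | (∀ i j, g.val i j ∈ A) ∧ ∀ i j, g.inv i j ∈ A}
      one_mem' := by
        constructor <;> intro i j <;>
          · show (1 : Matrix (Fin n) (Fin n) F) i j ∈ A
            rw [Matrix.one_apply]
            split
            · exact A.one_mem
            · exact A.zero_mem
      mul_mem' := by
        rintro a b ⟨ha, ha'⟩ ⟨hb, hb'⟩
        constructor <;> intro i j
        · show (a.val * b.val) i j ∈ A
          rw [Matrix.mul_apply]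
          exact A.sum_mem fun k _ => A.mul_mem (ha i k) (hb k j)
        · show (b.inv * a.inv) i j ∈ A
          rw [Matrix.mul_apply]
          exact A.sum_mem fun k _ => A.mul_mem (hb' i k) (ha' k j)
      inv_mem' := by
        rintro a ⟨ha, ha'⟩
        exact ⟨ha', ha⟩ } with hG
  have hHG : H ≤ G := by
    rw [← hT, Subgroup.closure_le]
    intro g hg
    constructor <;> intro i j <;> apply Algebra.subset_adjoin <;>
      apply Set.mem_biUnion hg
    · exact Or.inl ⟨(i, j), rfl⟩
    · exact Or.inr ⟨(i, j), rfl⟩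
  have hGfin : Finite G := by
    let f : G → (Fin n → Fin n → A) × (Fin n → Fin n → A) :=
      fun g => (fun i j => ⟨g.1.val i j, g.2.1 i j⟩, fun i j => ⟨g.1.inv i j, g.2.2 i j⟩)
    have hf : Function.Injective f := by
      intro a b hab
      have h1 : a.1.val = b.1.val := by
        funext i j
        exact congrArg Subtype.val (congrFun (congrFun (congrArg Prod.fst hab) i) j)
      exact Subtype.ext (Units.ext h1)
    exact Finite.of_injective f hf
  have : Function.Injective (fun h : H => (⟨h.1, hHG h.2⟩ : G)) := by
    intro a b hab
    have : (⟨a.1, hHG a.2⟩ : G) = ⟨b.1, hHG b.2⟩ := hab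
    have h3 := congrArg Subtype.val this
    exact Subtype.ext h3
  exact Finite.of_injective _ this
end

section
/- Let Γ and Δ be finitely generated groups, let G be a profinite group (a compact, Hausdorff, totally disconnected topological group), and let ι_Γ : Γ →* G and ι_Δ : Δ →* G be group homomorphisms with dense range such that: for every finite group Q and every group homomorphism f : Γ →* Q there is a continuous group homomorphism f̂ : G →* Q with f̂ ∘ ι_Γ = f, and likewise for every group homomorphism from Δ to a finite group. Then for every prime p there is a bijection e between the set of group homomorphisms Γ →* SL(2, F̄_p) and the set of group homomorphisms Δ →* SL(2, F̄_p), where F̄_p = AlgebraicClosure (ZMod p); moreover this bijection can be chosen so that for every ρ : Γ →* SL(2, F̄_p), the range of e(ρ) in SL(2, F̄_p) equals the range of ρ. -/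
/-!
A finitely generated subgroup of `SL(2, F̄_p)` is finite, since the entries of its generators
generate a finite subring of `F̄_p`.
So, with `SL(2, F̄_p)` discrete, every representation of `Γ` extends uniquely (by density) to a
continuous representation of `G`, and restriction along `ι_Γ` identifies the continuous
representations of `G` with those of `Γ`. Doing the same for `Δ` gives the bijection; it preserves
images because a continuous map to a discrete space takes the same values on `G` as on any dense
subset.
-/

namespace Matrix.SpecialLinearGroup

variable {n : Type*} [Fintype n] [DecidableEq n]

theorem mem_range_map_iff {R S : Type*} [CommRing R] [CommRing S] {f : R →+* S}
    (hf : Function.Injective f) {g : SpecialLinearGroup n S} :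
    g ∈ (map f : SpecialLinearGroup n R →* _).range ↔
      ∀ i j, (g : Matrix n n S) i j ∈ f.range := by
  constructor
  · rintro ⟨h, rfl⟩ i j
    exact ⟨h i j, rfl⟩
  · intro hg
    choose M hM using hg
    have hdet : (Matrix.of M).det = 1 := hf <| by
      rw [RingHom.map_det, map_one]
      convert g.2 using 2
      ext i j
      exact hM i j
    exact ⟨⟨Matrix.of M, hdet⟩, Subtype.ext (Matrix.ext hM)⟩

theorem finite_of_fg (F : Type*) {K : Type*} [CommRing F] [Finite F] [CommRing K] [Algebra F K]
    [Algebra.IsIntegral F K] {H : Subgroup (SpecialLinearGroup n K)} (hH : H.FG) : Finite H := by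
  obtain ⟨S, rfl⟩ := hH
  let T : Set K := ⋃ s ∈ S, Set.range fun ij : n × n => (s : Matrix n n K) ij.1 ij.2
  have hT : T.Finite := S.finite_toSet.biUnion fun s _ => Set.finite_range _
  let A := Algebra.adjoin F T
  have : Module.Finite F A :=
    Algebra.finite_adjoin_of_finite_of_isIntegral hT fun x _ => Algebra.IsIntegral.isIntegral x
  have : Finite A := Module.finite_of_finite F
  have hle : Subgroup.closure (S : Set _) ≤ (map (n := n) (A.val : A →+* K)).range := by
    refine (Subgroup.closure_le _).2 fun s hs => (mem_range_map_iff Subtype.val_injective).2 ?_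
    intro i j
    exact ⟨⟨_, Algebra.subset_adjoin (Set.mem_biUnion hs ⟨(i, j), rfl⟩)⟩, rfl⟩
  have : Finite (map (n := n) (A.val : A →+* K)).range :=
    Finite.of_surjective _ (MonoidHom.rangeRestrict_surjective _)
  exact Finite.of_injective (Subgroup.inclusion hle) (Subgroup.inclusion_injective hle)

theorem finite_range_of_fg (F : Type*) {K Γ : Type*} [CommRing F] [Finite F] [CommRing K]
    [Algebra F K] [Algebra.IsIntegral F K] [Group Γ] [Group.FG Γ]
    (ρ : Γ →* SpecialLinearGroup n K) : Finite ρ.range :=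
  finite_of_fg F ((Group.fg_iff_subgroup_fg _).1 inferInstance)

end Matrix.SpecialLinearGroup

section DenseRange

variable {Γ G : Type*} [Group Γ] [Group G] [TopologicalSpace G]

theorem MonoidHom.range_comp_of_denseRange {L : Type*} [Group L] [TopologicalSpace L]
    [DiscreteTopology L] {F : G →* L} (hF : Continuous F) {ι : Γ →* G}
    (hι : DenseRange ι) : (F.comp ι).range = F.range := by
  refine le_antisymm (by rintro _ ⟨γ, rfl⟩; exact ⟨ι γ, rfl⟩) ?_
  rintro _ ⟨g, rfl⟩
  exact hι.induction_on g ((isClosed_discrete _).preimage hF) fun γ => ⟨γ, rfl⟩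

def FiniteHomsExtend (ι : Γ →* G) : Prop :=
  ∀ (Q : Type) [Group Q] [Finite Q] [TopologicalSpace Q] [DiscreteTopology Q]
    (f : Γ →* Q), ∃ fhat : G →* Q, Continuous fhat ∧ fhat.comp ι = f

theorem FiniteHomsExtend.exists_continuous {L : Type} [Group L] [TopologicalSpace L]
    [DiscreteTopology L] {ι : Γ →* G} (hι : FiniteHomsExtend ι) (ρ : Γ →* L)
    [Finite ρ.range] :
    ∃ F : G →* L, Continuous F ∧ F.comp ι = ρ := by
  let _ : TopologicalSpace ρ.range := ⊥
  have : DiscreteTopology ρ.range := ⟨rfl⟩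
  obtain ⟨F, hF, hFι⟩ := hι ρ.range ρ.rangeRestrict
  refine ⟨ρ.range.subtype.comp F,
    Continuous.comp (g := ρ.range.subtype) continuous_of_discreteTopology hF, ?_⟩
  rw [MonoidHom.comp_assoc, hFι, MonoidHom.subtype_comp_rangeRestrict]

noncomputable def continuousHomEquivOfDenseRange {L : Type} [Group L] [TopologicalSpace L]
    [DiscreteTopology L] {ι : Γ →* G} (hdense : DenseRange ι) (hext : FiniteHomsExtend ι)
    (hfin : ∀ ρ : Γ →* L, Finite ρ.range) : {F : G →* L // Continuous F} ≃ (Γ →* L) :=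
  Equiv.ofBijective (fun F => F.1.comp ι)
    ⟨fun F F' h => Subtype.ext <| DFunLike.coe_injective <|
        hdense.equalizer F.2 F'.2 (congrArg DFunLike.coe h),
      fun ρ => by
        obtain ⟨F, hF, hFι⟩ := hext.exists_continuous ρ
        exact ⟨⟨F, hF⟩, hFι⟩⟩

end DenseRange

theorem sl2_representation_bijection_of_common_profinite_completion_general
    {Γ Δ G : Type*} [Group Γ] [Group Δ] [Group.FG Γ] [Group.FG Δ]
    [Group G] [TopologicalSpace G]
    (ιΓ : Γ →* G) (ιΔ : Δ →* G)
    (hΓdense : DenseRange ιΓ) (hΔdense : DenseRange ιΔ)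
    (hΓ : ∀ (Q : Type) [Group Q] [Finite Q] [TopologicalSpace Q] [DiscreteTopology Q]
      (f : Γ →* Q), ∃ fhat : G →* Q, Continuous fhat ∧ fhat.comp ιΓ = f)
    (hΔ : ∀ (Q : Type) [Group Q] [Finite Q] [TopologicalSpace Q] [DiscreteTopology Q]
      (f : Δ →* Q), ∃ fhat : G →* Q, Continuous fhat ∧ fhat.comp ιΔ = f)
    (p : ℕ) [Fact p.Prime] :
    ∃ e : (Γ →* Matrix.SpecialLinearGroup (Fin 2) (AlgebraicClosure (ZMod p))) ≃
        (Δ →* Matrix.SpecialLinearGroup (Fin 2) (AlgebraicClosure (ZMod p))),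
      ∀ ρ, (e ρ).range = ρ.range := by
  let _ : TopologicalSpace (Matrix.SpecialLinearGroup (Fin 2) (AlgebraicClosure (ZMod p))) := ⊥
  have : DiscreteTopology (Matrix.SpecialLinearGroup (Fin 2) (AlgebraicClosure (ZMod p))) :=
    ⟨rfl⟩
  let eΓ := continuousHomEquivOfDenseRange
    (L := Matrix.SpecialLinearGroup (Fin 2) (AlgebraicClosure (ZMod p))) hΓdense hΓ
    (Matrix.SpecialLinearGroup.finite_range_of_fg (ZMod p))
  let eΔ := continuousHomEquivOfDenseRange
    (L := Matrix.SpecialLinearGroup (Fin 2) (AlgebraicClosure (ZMod p))) hΔdense hΔ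
    (Matrix.SpecialLinearGroup.finite_range_of_fg (ZMod p))
  refine ⟨eΓ.symm.trans eΔ, fun ρ => ?_⟩
  calc (eΔ (eΓ.symm ρ)).range = (eΓ.symm ρ).1.range :=
        MonoidHom.range_comp_of_denseRange (eΓ.symm ρ).2 hΔdense
    _ = (eΓ (eΓ.symm ρ)).range :=
        (MonoidHom.range_comp_of_denseRange (eΓ.symm ρ).2 hΓdense).symm
    _ = ρ.range := by rw [Equiv.apply_symm_apply]

/-- Lemma 3.1 (replemma): if the finitely generated groups `Γ` and `Δ` have a common
profinite completion `G`, then for every prime `p` there is a bijection between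
`Hom(Γ, SL(2, F̄_p))` and `Hom(Δ, SL(2, F̄_p))` matching up the images. -/
theorem sl2_representation_bijection_of_common_profinite_completion
    {Γ Δ G : Type*} [Group Γ] [Group Δ] [Group.FG Γ] [Group.FG Δ]
    [Group G] [TopologicalSpace G] [IsTopologicalGroup G]
    [CompactSpace G] [T2Space G] [TotallyDisconnectedSpace G]
    (ιΓ : Γ →* G) (ιΔ : Δ →* G)
    (hΓdense : DenseRange ιΓ) (hΔdense : DenseRange ιΔ)
    (hΓ : ∀ (Q : Type) [Group Q] [Finite Q] [TopologicalSpace Q] [DiscreteTopology Q]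
      (f : Γ →* Q), ∃ fhat : G →* Q, Continuous fhat ∧ fhat.comp ιΓ = f)
    (hΔ : ∀ (Q : Type) [Group Q] [Finite Q] [TopologicalSpace Q] [DiscreteTopology Q]
      (f : Δ →* Q), ∃ fhat : G →* Q, Continuous fhat ∧ fhat.comp ιΔ = f)
    (p : ℕ) [Fact p.Prime] :
    ∃ e : (Γ →* Matrix.SpecialLinearGroup (Fin 2) (AlgebraicClosure (ZMod p))) ≃
        (Δ →* Matrix.SpecialLinearGroup (Fin 2) (AlgebraicClosure (ZMod p))),
      ∀ ρ, (e ρ).range = ρ.range :=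
  sl2_representation_bijection_of_common_profinite_completion_general ιΓ ιΔ hΓdense hΔdense hΓ hΔ p
end
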